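/- For the metric g_{(r₁,r₂)} on Sp(2) and the orthonormal frame element e₄ (off-diagonal block with y = 1), the sectional curvature K(e₄, e_p) equals r₁/2 for p = 1,2,3; equals 4 - (3/2)(r₁+r₂) for p = 5,6,7; and equals r₂/2 for p = 8,9,10. Consequently Ric(e₄) = 12 - 3(r₁+r₂). -/

import Mathlib

/-!
For ξ₁ = e₄, i.e. (x₁, y₁, z₁) = (0, 1, 0), at most one of the quantities α, β, γ in `sp2K`
survives for each block type of ξ₂: γ₁ = -x₂ in the upper-left block, γ₂ = z₂ in the lower-right
block, and α₁ = -α₂ = y₂ - ȳ₂ off the diagonal. So K(e₄, ξ₂) is an explicit multiple of ‖x₂‖²,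
‖z₂‖² or ‖y₂ - ȳ₂‖², and the normalisations ‖x₂‖² = 2/r₁, ‖z₂‖² = 2/r₂ and ‖y₂ - ȳ₂‖ = 2 (for a
unit imaginary y₂) give the nine values, whose sum is Ric(e₄).
-/

open Quaternion

/-- The quaternion unit i. -/
def qI : ℍ[ℝ] := ⟨0, 1, 0, 0⟩
/-- The quaternion unit j. -/
def qJ : ℍ[ℝ] := ⟨0, 0, 1, 0⟩
/-- The quaternion unit k. -/
def qK : ℍ[ℝ] := ⟨0, 0, 0, 1⟩

/-- The sectional curvature expression K(ξ₁,ξ₂) of the left-invariant metric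
g_{(r₁,r₂)} on Sp(2), in terms of the components of ξᵢ = ((xᵢ,yᵢ),(-conj yᵢ,zᵢ)). -/
noncomputable def sp2K (r₁ r₂ : ℝ) (x₁ y₁ z₁ x₂ y₂ z₂ : ℍ[ℝ]) : ℝ :=
  let α₁ : ℍ[ℝ] := y₂ * star y₁ - y₁ * star y₂
  let α₂ : ℍ[ℝ] := star y₂ * y₁ - star y₁ * y₂
  let β₁ : ℍ[ℝ] := x₁ * x₂ - x₂ * x₁
  let β₂ : ℍ[ℝ] := z₁ * z₂ - z₂ * z₁
  let γ₁ : ℍ[ℝ] := x₁ * y₂ - x₂ * y₁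
  let γ₂ : ℍ[ℝ] := y₁ * z₂ - y₂ * z₁
  (1 / 4) * ‖r₁ • γ₁ + r₂ • γ₂‖ ^ 2 + (r₁ / 8) * ‖β₁ + (3 - 2 * r₁) • α₁‖ ^ 2
    + (r₂ / 8) * ‖β₂ + (3 - 2 * r₂) • α₂‖ ^ 2
    + (1 / 2) * ((1 - r₁) ^ 3 + (1 - r₂) ^ 3) * ‖α₁‖ ^ 2

theorem norm_sqrt_smul_sq {E : Type*} [SeminormedAddCommGroup E] [NormedSpace ℝ E] {r : ℝ}
    (hr : 0 ≤ r) {v : E} (hv : ‖v‖ = 1) : ‖√r • v‖ ^ 2 = r := by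
  rw [norm_smul, hv, mul_one, Real.norm_of_nonneg (Real.sqrt_nonneg r), Real.sq_sqrt hr]

namespace Quaternion

theorem norm_eq_sqrt_normSq (a : ℍ[ℝ]) : ‖a‖ = √(normSq a) := by
  rw [normSq_eq_norm_mul_self, Real.sqrt_mul_self (norm_nonneg a)]

theorem norm_sub_star_of_re_eq_zero {a : ℍ[ℝ]} (ha : a.re = 0) : ‖a - star a‖ = 2 * ‖a‖ := by
  rw [star_eq_neg.2 ha, sub_neg_eq_add, ← two_smul ℝ a, norm_smul, Real.norm_two]

end Quaternion

theorem norm_qI : ‖qI‖ = 1 := by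
  rw [norm_eq_sqrt_normSq, normSq_def']
  simp [qI]

theorem norm_qJ : ‖qJ‖ = 1 := by
  rw [norm_eq_sqrt_normSq, normSq_def']
  simp [qJ]

theorem norm_qK : ‖qK‖ = 1 := by
  rw [norm_eq_sqrt_normSq, normSq_def']
  simp [qK]

section FrameE4

variable (r₁ r₂ : ℝ)

theorem sp2K_e4_upperLeft (x : ℍ[ℝ]) : sp2K r₁ r₂ 0 1 0 x 0 0 = r₁ ^ 2 / 4 * ‖x‖ ^ 2 := by
  simp [sp2K, norm_smul, mul_pow]
  ring

theorem sp2K_e4_lowerRight (z : ℍ[ℝ]) : sp2K r₁ r₂ 0 1 0 0 0 z = r₂ ^ 2 / 4 * ‖z‖ ^ 2 := by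
  simp [sp2K, norm_smul, mul_pow]
  ring

theorem sp2K_e4_offDiag (y : ℍ[ℝ]) :
    sp2K r₁ r₂ 0 1 0 0 y 0 = (r₁ / 8 * (3 - 2 * r₁) ^ 2 + r₂ / 8 * (3 - 2 * r₂) ^ 2
      + ((1 - r₁) ^ 3 + (1 - r₂) ^ 3) / 2) * ‖y - star y‖ ^ 2 := by
  simp [sp2K, norm_smul, mul_pow, norm_sub_rev (star y) y]
  ring

theorem sp2K_e4_upperLeft_of_norm_eq_one (h₁ : 0 ≤ r₁) {q : ℍ[ℝ]} (hq : ‖q‖ = 1) :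
    sp2K r₁ r₂ 0 1 0 (√(2 / r₁) • q) 0 0 = r₁ / 2 := by
  rw [sp2K_e4_upperLeft, norm_sqrt_smul_sq (by positivity) hq,
    show r₁ ^ 2 / 4 * (2 / r₁) = r₁ * r₁ / r₁ / 2 by ring, mul_self_div_self]

theorem sp2K_e4_lowerRight_of_norm_eq_one (h₂ : 0 ≤ r₂) {q : ℍ[ℝ]} (hq : ‖q‖ = 1) :
    sp2K r₁ r₂ 0 1 0 0 0 (√(2 / r₂) • q) = r₂ / 2 := by
  rw [sp2K_e4_lowerRight, norm_sqrt_smul_sq (by positivity) hq,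
    show r₂ ^ 2 / 4 * (2 / r₂) = r₂ * r₂ / r₂ / 2 by ring, mul_self_div_self]

theorem sp2K_e4_offDiag_of_re_eq_zero {q : ℍ[ℝ]} (hre : q.re = 0) (hq : ‖q‖ = 1) :
    sp2K r₁ r₂ 0 1 0 0 q 0 = 4 - 3 / 2 * (r₁ + r₂) := by
  rw [sp2K_e4_offDiag, norm_sub_star_of_re_eq_zero hre, hq]
  ring

end FrameE4

/-- Sectional curvatures K(e₄,e_p) for the orthonormal frame of (Sp(2), g_{(r₁,r₂)}),
and the resulting Ricci curvature Ric(e₄) = 12 - 3(r₁+r₂). -/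
theorem sp2_ric_e4 (r₁ r₂ : ℝ) (h₁ : 0 < r₁) (h₂ : 0 < r₂) :
    (sp2K r₁ r₂ 0 1 0 (Real.sqrt (2 / r₁) • qI) 0 0 = r₁ / 2) ∧
    (sp2K r₁ r₂ 0 1 0 (Real.sqrt (2 / r₁) • qJ) 0 0 = r₁ / 2) ∧
    (sp2K r₁ r₂ 0 1 0 (Real.sqrt (2 / r₁) • qK) 0 0 = r₁ / 2) ∧
    (sp2K r₁ r₂ 0 1 0 0 qI 0 = 4 - (3 / 2) * (r₁ + r₂)) ∧
    (sp2K r₁ r₂ 0 1 0 0 qJ 0 = 4 - (3 / 2) * (r₁ + r₂)) ∧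
    (sp2K r₁ r₂ 0 1 0 0 qK 0 = 4 - (3 / 2) * (r₁ + r₂)) ∧
    (sp2K r₁ r₂ 0 1 0 0 0 (Real.sqrt (2 / r₂) • qI) = r₂ / 2) ∧
    (sp2K r₁ r₂ 0 1 0 0 0 (Real.sqrt (2 / r₂) • qJ) = r₂ / 2) ∧
    (sp2K r₁ r₂ 0 1 0 0 0 (Real.sqrt (2 / r₂) • qK) = r₂ / 2) ∧
    (sp2K r₁ r₂ 0 1 0 (Real.sqrt (2 / r₁) • qI) 0 0
      + sp2K r₁ r₂ 0 1 0 (Real.sqrt (2 / r₁) • qJ) 0 0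
      + sp2K r₁ r₂ 0 1 0 (Real.sqrt (2 / r₁) • qK) 0 0
      + sp2K r₁ r₂ 0 1 0 0 qI 0
      + sp2K r₁ r₂ 0 1 0 0 qJ 0
      + sp2K r₁ r₂ 0 1 0 0 qK 0
      + sp2K r₁ r₂ 0 1 0 0 0 (Real.sqrt (2 / r₂) • qI)
      + sp2K r₁ r₂ 0 1 0 0 0 (Real.sqrt (2 / r₂) • qJ)
      + sp2K r₁ r₂ 0 1 0 0 0 (Real.sqrt (2 / r₂) • qK)
      = 12 - 3 * (r₁ + r₂)) := by
  have hx {q : ℍ[ℝ]} := sp2K_e4_upperLeft_of_norm_eq_one r₁ r₂ h₁.le (q := q)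
  have hy {q : ℍ[ℝ]} := sp2K_e4_offDiag_of_re_eq_zero r₁ r₂ (q := q)
  have hz {q : ℍ[ℝ]} := sp2K_e4_lowerRight_of_norm_eq_one r₁ r₂ h₂.le (q := q)
  rw [hx norm_qI, hx norm_qJ, hx norm_qK, hy rfl norm_qI, hy rfl norm_qJ, hy rfl norm_qK,
    hz norm_qI, hz norm_qJ, hz norm_qK]
  norm_num
  ring
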